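/- arXiv:2002.11929 — 5 statements merged into one kernel-verified Lean document; each statement's English description precedes it below -/
import Mathlib

section
/- Let T be a t-norm and let R be a fuzzy T-equivalence on a set U with a dually well-ordered spectrum. Then for any subset A ⊆ U, the fuzzy lower approximation of A equals the fuzzy lower approximation of A_E, i.e., μ_{[A]_R}(x) = μ_{[A_E]_R}(x) for all x ∈ U. -/
open unitInterval

noncomputable section

instance : Fact ((0:ℝ) ≤ 1) := ⟨zero_le_one⟩

/-- A t-norm on the unit interval: commutative, associative, monotone in each
argument, with `1` as unit. -/
def IsTnorm (T : I → I → I) : Prop :=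
  (∀ x y, T x y = T y x) ∧
  (∀ x y z, T (T x y) z = T x (T y z)) ∧
  (∀ x₁ x₂ y, x₁ ≤ x₂ → T x₁ y ≤ T x₂ y) ∧
  (∀ x y₁ y₂, y₁ ≤ y₂ → T x y₁ ≤ T x y₂) ∧
  (∀ x, T x 1 = x)

/-- A fuzzy `T`-equivalence: reflexive, symmetric, `T`-transitive fuzzy relation. -/
def IsFuzzyTEquiv {U : Type*} (T : I → I → I) (μ : U → U → I) : Prop :=
  (∀ x, μ x x = 1) ∧ (∀ x y, μ x y = μ y x) ∧ (∀ x y z, T (μ x y) (μ y z) ≤ μ x z)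

/-- Fuzzy upper approximation of a crisp set `A`: `sup {μ x y | y ∈ A}` (`sup ∅ = 0`). -/
def upperApp {U : Type*} (μ : U → U → I) (A : Set U) (x : U) : I := sSup (μ x '' A)

/-- Fuzzy lower approximation of a crisp set `A`: `inf {1 - μ x y | y ∉ A}` (`inf ∅ = 1`). -/
def lowerApp {U : Type*} (μ : U → U → I) (A : Set U) (x : U) : I :=
  sInf ((fun y => σ (μ x y)) '' Aᶜ)

/-- The spectrum of a fuzzy relation. -/
def fuzzySpectrum {U : Type*} (μ : U → U → I) : Set I := {r | ∃ x y, μ x y = r}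

/-- `R` has a dually well-ordered spectrum: every nonempty subset of the
spectrum has a greatest element. -/
def DuallyWellOrdered {U : Type*} (μ : U → U → I) : Prop :=
  ∀ s ⊆ fuzzySpectrum μ, s.Nonempty → ∃ m ∈ s, ∀ r ∈ s, r ≤ m

/-- Upper approximation by the crisp equivalence `E = {(x,y) | μ x y = 1}`. -/
def upperE {U : Type*} (μ : U → U → I) (A : Set U) : Set U :=
  {x | ({y | μ x y = 1} ∩ A).Nonempty}

/-- Lower approximation by the crisp equivalence `E = {(x,y) | μ x y = 1}`. -/
def lowerE {U : Type*} (μ : U → U → I) (A : Set U) : Set U :=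
  {x | {y | μ x y = 1} ⊆ A}

/-- Upper approximation by the support relation `S = {(x,y) | μ x y > 0}`. -/
def upperS {U : Type*} (μ : U → U → I) (A : Set U) : Set U :=
  {x | ({y | 0 < μ x y} ∩ A).Nonempty}

/-- Lower approximation by the support relation `S = {(x,y) | μ x y > 0}`. -/
def lowerS {U : Type*} (μ : U → U → I) (A : Set U) : Set U :=
  {x | {y | 0 < μ x y} ⊆ A}

lemma le_of_rel_eq_one {U : Type*} {T : I → I → I} {μ : U → U → I}
    (hunit : ∀ a, T a 1 = a) (htrans : ∀ x y z, T (μ x y) (μ y z) ≤ μ x z)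
    {x y z : U} (hyz : μ y z = 1) : μ x y ≤ μ x z :=
  calc μ x y = T (μ x y) (μ y z) := by rw [hyz, hunit]
    _ ≤ μ x z := htrans x y z

lemma lowerE_subset {U : Type*} {μ : U → U → I} (hrefl : ∀ x, μ x x = 1) (A : Set U) :
    lowerE μ A ⊆ A :=
  fun x hx => hx (hrefl x)

lemma lowerApp_mono {U : Type*} (μ : U → U → I) {A B : Set U} (hAB : A ⊆ B) (x : U) :
    lowerApp μ A x ≤ lowerApp μ B x :=
  sInf_le_sInf (Set.image_mono (Set.compl_subset_compl.mpr hAB))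

/-- Every `y ∉ A_E` has some `z ∉ A` with `μ y z = 1`, and then `1 - μ x z ≤ 1 - μ x y`. -/
lemma lowerApp_le_lowerApp_lowerE {U : Type*} {T : I → I → I} {μ : U → U → I}
    (hunit : ∀ a, T a 1 = a) (htrans : ∀ x y z, T (μ x y) (μ y z) ≤ μ x z)
    (A : Set U) (x : U) : lowerApp μ A x ≤ lowerApp μ (lowerE μ A) x := by
  refine le_sInf ?_
  rintro _ ⟨y, hy, rfl⟩
  obtain ⟨z, hyz, hz⟩ := Set.not_subset.mp hy
  calc lowerApp μ A x ≤ σ (μ x z) := sInf_le ⟨z, hz, rfl⟩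
    _ ≤ σ (μ x y) := symm_le_symm.mpr (le_of_rel_eq_one hunit htrans hyz)

theorem stmt6_general {U : Type*} (T : I → I → I) (μ : U → U → I)
    (hT : IsTnorm T) (hR : IsFuzzyTEquiv T μ)
    (A : Set U) :
    ∀ x : U, lowerApp μ A x = lowerApp μ (lowerE μ A) x := by
  obtain ⟨-, -, -, -, hunit⟩ := hT
  obtain ⟨hrefl, -, htrans⟩ := hR
  intro x
  exact le_antisymm (lowerApp_le_lowerApp_lowerE hunit htrans A x)
    (lowerApp_mono μ (lowerE_subset hrefl A) x)

/-- `μ_[A]_R = μ_[A_E]_R`. -/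
theorem stmt6 {U : Type*} (T : I → I → I) (μ : U → U → I)
    (hT : IsTnorm T) (hR : IsFuzzyTEquiv T μ) (hD : DuallyWellOrdered μ)
    (A : Set U) :
    ∀ x : U, lowerApp μ A x = lowerApp μ (lowerE μ A) x :=
  stmt6_general T μ hT hR A
end
end

section
/- Let T be a t-norm and let R be a fuzzy T-equivalence on a set U with a dually well-ordered spectrum. If A, B ⊆ U satisfy A_E ⊆ B_E and A^E ⊆ B^E, then μ_{[A]_R}(x) ≤ μ_{[B]_R}(x) and μ_{[A]^R}(x) ≤ μ_{[B]^R}(x) for all x ∈ U; i.e., the map sending the crisp rough set (A_E, A^E) to the fuzzy rough set (μ_{[A]_R}, μ_{[A]^R}) is order-preserving. -/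
open unitInterval

noncomputable section

/-! Since `μ` is `T`-transitive with unit `1`, `μ x` is constant on every `E`-class. A point
outside `B` is outside `B_E ⊇ A_E`, so its `E`-class meets `Aᶜ`, which bounds the lower
approximation; dually, a point of `A` lies in `A^E ⊆ B^E`, so its `E`-class meets `B`. -/

theorem IsFuzzyTEquiv.le_of_eq_one {U : Type*} {T : I → I → I} {μ : U → U → I}
    (hT : IsTnorm T) (hR : IsFuzzyTEquiv T μ) {y z : U} (hyz : μ y z = 1) (x : U) :
    μ x y ≤ μ x z :=
  calc μ x y = T (μ x y) 1 := (hT.2.2.2.2 _).symm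
    _ = T (μ x y) (μ y z) := by rw [hyz]
    _ ≤ μ x z := hR.2.2 x y z

theorem lowerApp_le_of_lowerE_subset {U : Type*} {T : I → I → I} {μ : U → U → I}
    (hT : IsTnorm T) (hR : IsFuzzyTEquiv T μ) {A B : Set U} (h : lowerE μ A ⊆ lowerE μ B)
    (x : U) : lowerApp μ A x ≤ lowerApp μ B x := by
  refine le_sInf ?_
  rintro _ ⟨y, hyB, rfl⟩
  have hyA : y ∉ lowerE μ A := fun hyA => hyB (h hyA (hR.1 y))
  obtain ⟨z, hyz, hzA⟩ := Set.not_subset.mp hyA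
  exact sInf_le_of_le ⟨z, hzA, rfl⟩ (symm_le_symm.mpr (hR.le_of_eq_one hT hyz x))

theorem upperApp_le_of_upperE_subset {U : Type*} {T : I → I → I} {μ : U → U → I}
    (hT : IsTnorm T) (hR : IsFuzzyTEquiv T μ) {A B : Set U} (h : upperE μ A ⊆ upperE μ B)
    (x : U) : upperApp μ A x ≤ upperApp μ B x := by
  refine sSup_le ?_
  rintro _ ⟨y, hyA, rfl⟩
  obtain ⟨z, hyz, hzB⟩ := h ⟨y, hR.1 y, hyA⟩
  exact le_sSup_of_le ⟨z, hzB, rfl⟩ (hR.le_of_eq_one hT hyz x)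

theorem stmt8_general {U : Type*} (T : I → I → I) (μ : U → U → I)
    (hT : IsTnorm T) (hR : IsFuzzyTEquiv T μ)
    (A B : Set U) (h₁ : lowerE μ A ⊆ lowerE μ B) (h₂ : upperE μ A ⊆ upperE μ B) :
    ∀ x : U, lowerApp μ A x ≤ lowerApp μ B x ∧ upperApp μ A x ≤ upperApp μ B x := fun x =>
  ⟨lowerApp_le_of_lowerE_subset hT hR h₁ x, upperApp_le_of_upperE_subset hT hR h₂ x⟩

/-- the map `(A_E, A^E) ↦ (μ_[A]_R, μ_[A]^R)` is order-preserving. -/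
theorem stmt8 {U : Type*} (T : I → I → I) (μ : U → U → I)
    (hT : IsTnorm T) (hR : IsFuzzyTEquiv T μ) (hD : DuallyWellOrdered μ)
    (A B : Set U) (h₁ : lowerE μ A ⊆ lowerE μ B) (h₂ : upperE μ A ⊆ upperE μ B) :
    ∀ x : U, lowerApp μ A x ≤ lowerApp μ B x ∧ upperApp μ A x ≤ upperApp μ B x :=
  stmt8_general T μ hT hR A B h₁ h₂
end
end

section
/- Let R be a fuzzy relation on a set U with a dually well-ordered spectrum, let α ∈ (0,1], and let R_α = {(x,y) ∈ U² | μ_R(x,y) ≥ α} be the α-section of R. Then for any subset A ⊆ U, the upper approximation of A by R_α satisfies A^{R_α} = {x ∈ U | μ_{[A]^R}(x) ≥ α}. -/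
open unitInterval

noncomputable section

theorem le_upperApp_of_mem {U : Type*} (μ : U → U → I) {A : Set U} {x y : U} (hy : y ∈ A) :
    μ x y ≤ upperApp μ A x :=
  le_sSup (Set.mem_image_of_mem _ hy)

theorem upperApp_empty {U : Type*} (μ : U → U → I) (x : U) : upperApp μ ∅ x = 0 := by
  simp only [upperApp, Set.image_empty, sSup_empty]
  rfl

theorem DuallyWellOrdered.exists_upperApp_eq {U : Type*} {μ : U → U → I}
    (hD : DuallyWellOrdered μ) {A : Set U} (hA : A.Nonempty) (x : U) :
    ∃ y ∈ A, upperApp μ A x = μ x y := by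
  obtain ⟨_, ⟨y, hyA, rfl⟩, hmax⟩ :=
    hD (μ x '' A) (by rintro _ ⟨y, -, rfl⟩; exact ⟨x, y, rfl⟩) (hA.image _)
  exact ⟨y, hyA, le_antisymm (sSup_le hmax) (le_upperApp_of_mem μ hyA)⟩

/-- `A^{R_α} = {x | μ_[A]^R(x) ≥ α}` for `α ∈ (0,1]`. -/
theorem stmt13 {U : Type*} (μ : U → U → I) (hD : DuallyWellOrdered μ)
    (α : I) (hα : 0 < α) (A : Set U) :
    {x : U | ({y : U | α ≤ μ x y} ∩ A).Nonempty} = {x : U | α ≤ upperApp μ A x} := by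
  ext x
  refine ⟨fun ⟨y, hαy, hyA⟩ => hαy.trans (le_upperApp_of_mem μ hyA), fun hα_le => ?_⟩
  rcases A.eq_empty_or_nonempty with rfl | hA
  · exact absurd hα (not_lt.mpr (upperApp_empty μ x ▸ hα_le))
  · obtain ⟨y, hyA, hsup⟩ := hD.exists_upperApp_eq hA x
    exact ⟨y, show α ≤ μ x y from hsup ▸ hα_le, hyA⟩
end
end

section
/- Let R be a fuzzy relation on a set U with a dually well-ordered spectrum, let α ∈ (0,1], and let R_α = {(x,y) ∈ U² | μ_R(x,y) ≥ α} be the α-section of R. Then for any subset A ⊆ U, the lower approximation of A by R_α satisfies A_{R_α} = {x ∈ U | μ_{[A]_R}(x) > 1 − α}. -/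
open unitInterval

noncomputable section

/-!
If some `y ∉ A` exists, dual well-ordering of the spectrum makes the supremum of `μ x y` over
`y ∉ A` a maximum, so `μ_[A]_R(x) = 1 - μ x y₀` for a single `y₀ ∉ A`; then
`1 - α < μ_[A]_R(x)` says exactly that every `y ∉ A` has `μ x y < α`, i.e. `R_α(x) ⊆ A`.
When `A = U` both sides are everything, using `α > 0`.
-/

section

variable {U : Type*} {μ : U → U → I} {A : Set U} {x y : U}

theorem lowerApp_le_symm (hy : y ∉ A) : lowerApp μ A x ≤ σ (μ x y) :=
  sInf_le ⟨y, hy, rfl⟩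

theorem lowerApp_univ : lowerApp μ Set.univ x = 1 := by
  rw [lowerApp, Set.compl_univ, Set.image_empty, sInf_empty]
  rfl

theorem DuallyWellOrdered.exists_lowerApp_eq (hD : DuallyWellOrdered μ) (x : U)
    (hA : Aᶜ.Nonempty) : ∃ y ∉ A, lowerApp μ A x = σ (μ x y) := by
  obtain ⟨_, ⟨y, hy, rfl⟩, hmax⟩ :=
    hD (μ x '' Aᶜ) (by rintro _ ⟨y, -, rfl⟩; exact ⟨x, y, rfl⟩) (hA.image _)
  refine ⟨y, hy, le_antisymm (lowerApp_le_symm hy) (le_sInf ?_)⟩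
  rintro _ ⟨z, hz, rfl⟩
  exact symm_le_symm.mpr (hmax _ ⟨z, hz, rfl⟩)

end

/-- `A_{R_α} = {x | μ_[A]_R(x) > 1 - α}` for `α ∈ (0,1]`. -/
theorem stmt14 {U : Type*} (μ : U → U → I) (hD : DuallyWellOrdered μ)
    (α : I) (hα : 0 < α) (A : Set U) :
    {x : U | {y : U | α ≤ μ x y} ⊆ A} = {x : U | σ α < lowerApp μ A x} := by
  ext x
  change {y | α ≤ μ x y} ⊆ A ↔ σ α < lowerApp μ A x
  constructor
  · intro hx
    rcases (Aᶜ).eq_empty_or_nonempty with hA | hA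
    · rw [Set.compl_empty_iff.mp hA, lowerApp_univ, ← symm_zero]
      exact symm_lt_symm.mpr hα
    · obtain ⟨y, hy, hxy⟩ := hD.exists_lowerApp_eq x hA
      have hlt : μ x y < α := lt_of_not_ge fun h => hy (hx h)
      exact hxy ▸ symm_lt_symm.mpr hlt
  · intro hx y hαy
    by_contra hy
    exact (symm_le_symm.mpr hαy).not_gt (hx.trans_le (lowerApp_le_symm hy))
end
end

section
/- Let R be a fuzzy equivalence relation on a set U (reflexive, symmetric, and min-transitive: min(μ_R(x,y), μ_R(y,z)) ≤ μ_R(x,z)) whose membership function takes only the values 0, 1/2, and 1. Then for any subset A ⊆ U and any x ∈ U, the lower approximation satisfies: μ_{[A]_R}(x) = 1 if x ∈ A_S, μ_{[A]_R}(x) = 1/2 if x ∈ A_E \ A_S, and μ_{[A]_R}(x) = 0 if x ∉ A_E. -/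
open unitInterval

noncomputable section

section

variable {U : Type*} {μ : U → U → I} {A : Set U} {x : U}

lemma lowerApp_eq_symm_upperApp_compl :
    lowerApp μ A x = σ (upperApp μ Aᶜ x) := by
  refine le_antisymm ?_ (le_sInf ?_)
  · refine le_symm_comm.mp (sSup_le ?_)
    rintro _ ⟨y, hy, rfl⟩
    exact le_symm_comm.mp (sInf_le ⟨y, hy, rfl⟩)
  · rintro _ ⟨y, hy, rfl⟩
    exact symm_le_symm.mpr (le_sSup ⟨y, hy, rfl⟩)

lemma upperApp_compl_eq_zero_of_mem_lowerS (hx : x ∈ lowerS μ A) : upperApp μ Aᶜ x = 0 := by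
  refine le_antisymm (sSup_le ?_) nonneg'
  rintro _ ⟨y, hy, rfl⟩
  exact not_lt.mp fun hpos => hy (hx hpos)

lemma upperApp_compl_eq_one_of_notMem_lowerE (hx : x ∉ lowerE μ A) : upperApp μ Aᶜ x = 1 := by
  obtain ⟨y, hy1, hyA⟩ := Set.not_subset.mp hx
  exact le_antisymm le_one' (hy1 ▸ le_sSup ⟨y, hyA, rfl⟩)

lemma upperApp_compl_eq_half
    (hval : ∀ a b, μ a b = 0 ∨ μ a b = (⟨1/2, by norm_num⟩ : I) ∨ μ a b = 1)
    (hE : x ∈ lowerE μ A) (hS : x ∉ lowerS μ A) :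
    upperApp μ Aᶜ x = (⟨1/2, by norm_num⟩ : I) := by
  refine IsGreatest.csSup_eq ⟨?_, ?_⟩
  · obtain ⟨y, hpos, hyA⟩ := Set.not_subset.mp hS
    refine ⟨y, hyA, ?_⟩
    rcases hval x y with h | h | h
    · exact absurd h (ne_of_gt hpos)
    · exact h
    · exact absurd (hE h) hyA
  · rintro _ ⟨y, hyA, rfl⟩
    rcases hval x y with h | h | h
    · exact h ▸ nonneg'
    · exact h.le
    · exact absurd (hE h) hyA

end

lemma symm_half : σ (⟨1/2, by norm_num⟩ : I) = ⟨1/2, by norm_num⟩ := by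
  ext
  rw [coe_symm_eq]
  norm_num

/-- for a three-valued (0, 1/2, 1) fuzzy equivalence (min-transitive),
the lower approximation is 1 on `A_S`, 1/2 on `A_E \\ A_S`, and 0 outside `A_E`. -/
theorem stmt16 {U : Type*} (μ : U → U → I)
    (hval : ∀ x y, μ x y = 0 ∨ μ x y = (⟨1/2, by norm_num⟩ : I) ∨ μ x y = 1) :
    ∀ (A : Set U) (x : U),
      (x ∈ lowerS μ A → lowerApp μ A x = 1) ∧
      (x ∈ lowerE μ A \ lowerS μ A → lowerApp μ A x = (⟨1/2, by norm_num⟩ : I)) ∧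
      (x ∉ lowerE μ A → lowerApp μ A x = 0) := by
  intro A x
  simp only [lowerApp_eq_symm_upperApp_compl]
  refine ⟨fun hS => ?_, fun hES => ?_, fun hE => ?_⟩
  · rw [upperApp_compl_eq_zero_of_mem_lowerS hS, symm_zero]
  · rw [upperApp_compl_eq_half hval hES.1 hES.2, symm_half]
  · rw [upperApp_compl_eq_one_of_notMem_lowerE hE, symm_one]
end
end
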